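/- With the setting of Theorem 4.5: γ ≥ 3, λ - n - 1 = β(γ-2) + ε (0 ≤ ε ≤ γ-3), r = 2β + 1 - n, d = γ(β - n) + λ, the Castelnuovo bound satisfies π(d, r) = (γ-1)(λ - 1) - nγ(γ-1)/2, which equals the genus g = (λ-1)(γ-1) - nγ(γ-1)/2 of a smooth curve in |γC_0 + λL| on F_n. Hence the embedded curve is extremal. -/

import Mathlib

theorem two_mul_castelnuovo_bound_eq {R : Type*} [CommRing R] {γ n lam β ε : R}
    (hdiv : lam - n - 1 = β * (γ - 2) + ε) :
    (γ - 1) * ((γ - 2) * (2 * β - n) + 2 * ε) =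
      2 * ((γ - 1) * (lam - 1)) - n * γ * (γ - 1) := by
  -- `(γ-2)(2β-n) + 2ε = 2(λ-n-1) - n(γ-2) = 2(λ-1) - nγ`
  linear_combination (1 - γ) * 2 * hdiv

theorem castelnuovo_bound_equals_genus_general (γ n lam β ε r g : ℤ)
    (hdiv : lam - n - 1 = β * (γ - 2) + ε)
    (hr : r = 2 * β + 1 - n)
    (hg : 2 * g = 2 * ((lam - 1) * (γ - 1)) - n * γ * (γ - 1)) :
    (γ - 1) * ((γ - 2) * (r - 1) + 2 * ε) =
      2 * ((γ - 1) * (lam - 1)) - n * γ * (γ - 1) ∧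
    (γ - 1) * ((γ - 2) * (r - 1) + 2 * ε) = 2 * g := by
  have hr' : r - 1 = 2 * β - n := by rw [hr]; ring
  have hbound := two_mul_castelnuovo_bound_eq hdiv
  rw [hr']
  exact ⟨hbound, by rw [hbound, hg]; ring⟩

/-- In the setting of Theorem 4.5: `γ ≥ 3`, `λ - n - 1 = β(γ-2) + ε`
(`0 ≤ ε ≤ γ-3`), `r = 2β + 1 - n`, `d = γ(β - n) + λ`. The Castelnuovo bound
`π(d, r) = (γ-1)((γ-2)(r-1)/2 + ε)` equals `(γ-1)(λ-1) - nγ(γ-1)/2`, which is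
the genus `g` of a smooth curve in `|γC₀ + λL|` on `F_n`; the embedded curve is
extremal. (Stated after multiplication by 2 to avoid integer division.) -/
theorem castelnuovo_bound_equals_genus (γ n lam β ε r d g : ℤ)
    (hγ : 3 ≤ γ) (hn : 0 ≤ n)
    (hlam : γ * (γ + n - 2) ≤ 2 * lam)
    (hdiv : lam - n - 1 = β * (γ - 2) + ε)
    (hε0 : 0 ≤ ε) (hε1 : ε ≤ γ - 3)
    (hr : r = 2 * β + 1 - n) (hd : d = γ * (β - n) + lam)
    (hg : 2 * g = 2 * ((lam - 1) * (γ - 1)) - n * γ * (γ - 1)) :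
    (γ - 1) * ((γ - 2) * (r - 1) + 2 * ε) =
      2 * ((γ - 1) * (lam - 1)) - n * γ * (γ - 1) ∧
    (γ - 1) * ((γ - 2) * (r - 1) + 2 * ε) = 2 * g :=
  castelnuovo_bound_equals_genus_general γ n lam β ε r g hdiv hr hg
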